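/- Let ω be a positive real number, α and β nonzero complex numbers with α·β = −ω², and v, p : ℝ → ℂ differentiable functions satisfying v′(t) = α·p(t) and p′(t) = β·v(t) for all real t. Fix a nonzero time step δt and let κ = 2 sin(ωδt/2)/(ωδt). Define P₀ = p(0), V₀ = v(δt/2), and for n ≥ 0: Pₙ₊₁ = Pₙ + δt·κ·β·Vₙ, Vₙ₊₁ = Vₙ + δt·κ·α·Pₙ₊₁. Then the iterates are bounded uniformly in n and in δt: for all natural numbers n, |Pₙ| ≤ |p(0)| + (|β|/ω)·|v(0)| and |Vₙ| ≤ |v(0)| + (|α|/ω)·|p(0)|. This expresses the unconditional stability of the k-space-corrected scheme. -/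

import Mathlib

open Complex Real

lemma exp_sol (c : ℂ) (f : ℝ → ℂ) (hf : Differentiable ℝ f)
    (hf' : ∀ t, deriv f t = c * f t) :
    ∀ t : ℝ, f t = f 0 * Complex.exp (c * t) := by
  have H : ∀ t : ℝ, HasDerivAt (fun s : ℝ => f s * Complex.exp (-(c * s))) 0 t := by
    intro t
    have h1 : HasDerivAt f (c * f t) t := by
      have := (hf t).hasDerivAt
      rwa [hf' t] at this
    have h2 : HasDerivAt (fun s : ℝ => Complex.exp (-(c * s))) (Complex.exp (-(c * t)) * (-c)) t := by
      have hinner : HasDerivAt (fun z : ℂ => Complex.exp (-(c * z))) (Complex.exp (-(c * t)) * (-c)) (t : ℂ) := by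
        have h3 : HasDerivAt (fun z : ℂ => -(c * z)) (-c) (t : ℂ) := by
          have := ((hasDerivAt_id (t : ℂ)).const_mul c).neg; rw [mul_one] at this; exact this
        exact (Complex.hasDerivAt_exp (-(c * t))).comp (t : ℂ) h3
      exact hinner.comp_ofReal
    have h3 : HasDerivAt (fun s : ℝ => f s * Complex.exp (-(c * s))) _ t := h1.mul h2
    convert h3 using 1
    ring
  have hd : Differentiable ℝ (fun s : ℝ => f s * Complex.exp (-(c * s))) :=
    fun t => (H t).differentiableAt
  intro t
  have hc := is_const_of_deriv_eq_zero hd (fun t => (H t).deriv) t 0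
  simp only [Complex.ofReal_zero, mul_zero, neg_zero, Complex.exp_zero, mul_one] at hc
  have := congrArg (· * Complex.exp (c * t)) hc
  rw [mul_assoc, ← Complex.exp_add] at this
  simpa using this

theorem kspace_scheme_unconditionally_stable
    (ω : ℝ) (hω : 0 < ω) (α β : ℂ) (hα : α ≠ 0) (hβ : β ≠ 0)
    (hαβ : α * β = -(ω : ℂ) ^ 2)
    (v p : ℝ → ℂ) (hv : Differentiable ℝ v) (hp : Differentiable ℝ p)
    (hv' : ∀ t : ℝ, deriv v t = α * p t) (hp' : ∀ t : ℝ, deriv p t = β * v t)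
    (δt : ℝ) (hδt : δt ≠ 0)
    (κ : ℝ) (hκ : κ = 2 * Real.sin (ω * δt / 2) / (ω * δt))
    (P V : ℕ → ℂ) (hP0 : P 0 = p 0) (hV0 : V 0 = v (δt / 2))
    (hPrec : ∀ n : ℕ, P (n + 1) = P n + (δt : ℂ) * (κ : ℂ) * β * V n)
    (hVrec : ∀ n : ℕ, V (n + 1) = V n + (δt : ℂ) * (κ : ℂ) * α * P (n + 1)) :
    ∀ n : ℕ,
      ‖P n‖ ≤ ‖p 0‖ + (‖β‖ / ω) * ‖v 0‖ ∧
      ‖V n‖ ≤ ‖v 0‖ + (‖α‖ / ω) * ‖p 0‖ := by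
  have hωC : ((ω : ℂ)) ≠ 0 := Complex.ofReal_ne_zero.mpr hω.ne'
  -- diagonalizing variables
  set c : ℂ := (ω : ℂ) * I with hc
  have hu1 : ∀ t : ℝ, β * v t + c * p t = (β * v 0 + c * p 0) * Complex.exp (c * t) := by
    have := exp_sol c (fun t => β * v t + c * p t)
      (((hv.const_mul β).add (hp.const_mul c)))
      (by
        intro t
        have hv1 : HasDerivAt v (α * p t) t := by
          have := (hv t).hasDerivAt; rwa [hv' t] at this
        have hp1 : HasDerivAt p (β * v t) t := by
          have := (hp t).hasDerivAt; rwa [hp' t] at this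
        have h : HasDerivAt (fun t => β * v t + c * p t) _ t := ((hv1.const_mul β).add (hp1.const_mul c))
        rw [h.deriv]
        have : c * c = -(ω:ℂ)^2 := by
          simp only [hc]; rw [mul_mul_mul_comm, Complex.I_mul_I]; ring
        linear_combination p t * hαβ - p t * this)
    simpa using this
  have hu2 : ∀ t : ℝ, β * v t - c * p t = (β * v 0 - c * p 0) * Complex.exp (-c * t) := by
    have := exp_sol (-c) (fun t => β * v t - c * p t)
      (((hv.const_mul β).sub (hp.const_mul c)))
      (by
        intro t
        have hv1 : HasDerivAt v (α * p t) t := by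
          have := (hv t).hasDerivAt; rwa [hv' t] at this
        have hp1 : HasDerivAt p (β * v t) t := by
          have := (hp t).hasDerivAt; rwa [hp' t] at this
        have h : HasDerivAt (fun t => β * v t - c * p t) _ t := ((hv1.const_mul β).sub (hp1.const_mul c))
        rw [h.deriv]
        have : c * c = -(ω:ℂ)^2 := by
          simp only [hc]; rw [mul_mul_mul_comm, Complex.I_mul_I]; ring
        linear_combination p t * hαβ - p t * this)
    simpa using this
  -- explicit solution formulas (scaled to avoid division)
  have hexp1 : ∀ t : ℝ, Complex.exp (c * t) =
      Complex.cos ((ω : ℂ) * t) + Complex.sin ((ω : ℂ) * t) * I := by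
    intro t
    rw [show c * (t : ℂ) = ((ω : ℂ) * t) * I by rw [hc]; ring, Complex.exp_mul_I]
  have hexp2 : ∀ t : ℝ, Complex.exp (-c * t) =
      Complex.cos ((ω : ℂ) * t) - Complex.sin ((ω : ℂ) * t) * I := by
    intro t
    rw [show -c * (t : ℂ) = (-((ω : ℂ) * t)) * I by rw [hc]; ring, Complex.exp_mul_I,
      Complex.cos_neg, Complex.sin_neg]
    ring
  have pform : ∀ t : ℝ, (ω : ℂ) * p t =
      (ω : ℂ) * p 0 * Complex.cos ((ω : ℂ) * t) + β * v 0 * Complex.sin ((ω : ℂ) * t) := by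
    intro t
    have e1 := hu1 t; have e2 := hu2 t
    rw [hexp1 t] at e1; rw [hexp2 t] at e2
    have h2 : (2 * I) * ((ω : ℂ) * p t) =
        (2 * I) * ((ω : ℂ) * p 0 * Complex.cos ((ω : ℂ) * t) + β * v 0 * Complex.sin ((ω : ℂ) * t)) := by
      linear_combination e1 - e2
    have h2I : (2 * I : ℂ) ≠ 0 := by simp [Complex.I_ne_zero]
    exact mul_left_cancel₀ h2I h2
  have vformβ : ∀ t : ℝ, β * v t =
      β * v 0 * Complex.cos ((ω : ℂ) * t) - (ω : ℂ) * p 0 * Complex.sin ((ω : ℂ) * t) := by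
    intro t
    have e1 := hu1 t; have e2 := hu2 t
    rw [hexp1 t] at e1; rw [hexp2 t] at e2
    have h2 : (2 : ℂ) * (β * v t) =
        (2 : ℂ) * (β * v 0 * Complex.cos ((ω : ℂ) * t) - (ω : ℂ) * p 0 * Complex.sin ((ω : ℂ) * t)) := by
      linear_combination e1 + e2 + 2 * (ω : ℂ) * p 0 * Complex.sin ((ω : ℂ) * t) * Complex.I_sq
    exact mul_left_cancel₀ two_ne_zero h2
  have vform : ∀ t : ℝ, (ω : ℂ) * v t =
      (ω : ℂ) * v 0 * Complex.cos ((ω : ℂ) * t) + α * p 0 * Complex.sin ((ω : ℂ) * t) := by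
    intro t
    have h2 : β * ((ω : ℂ) * v t) =
        β * ((ω : ℂ) * v 0 * Complex.cos ((ω : ℂ) * t) + α * p 0 * Complex.sin ((ω : ℂ) * t)) := by
      linear_combination (ω : ℂ) * vformβ t - p 0 * Complex.sin ((ω : ℂ) * t) * hαβ
    exact mul_left_cancel₀ hβ h2
  -- the key κ relation
  have hδκ : ((δt : ℂ) * (κ : ℂ)) * (ω : ℂ) = 2 * Complex.sin ((ω : ℂ) * δt / 2) := by
    have hr : δt * κ * ω = 2 * Real.sin (ω * δt / 2) := by
      rw [hκ]; field_simp
    calc ((δt : ℂ) * (κ : ℂ)) * (ω : ℂ) = ((δt * κ * ω : ℝ) : ℂ) := by push_cast; ring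
    _ = ((2 * Real.sin (ω * δt / 2) : ℝ) : ℂ) := by rw [hr]
    _ = 2 * Complex.sin ((ω : ℂ) * δt / 2) := by
        push_cast [Complex.ofReal_sin]; ring_nf
  -- step identities
  have hstepP : ∀ t : ℝ, p (t + δt) = p t + (δt : ℂ) * (κ : ℂ) * β * v (t + δt / 2) := by
    intro t
    have key : (ω : ℂ) * p (t + δt) =
        (ω : ℂ) * (p t + (δt : ℂ) * (κ : ℂ) * β * v (t + δt / 2)) := by
      have e1 := pform (t + δt)
      have e2 := pform t
      have e3 := vform (t + δt / 2)
      rw [show ((ω : ℂ) * ((t + δt : ℝ) : ℂ)) = ((ω : ℂ) * ((t + δt/2 : ℝ) : ℂ)) + (ω : ℂ) * δt / 2 by push_cast; ring,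
        Complex.cos_add, Complex.sin_add] at e1
      rw [show ((ω : ℂ) * (t : ℂ)) = ((ω : ℂ) * ((t + δt/2 : ℝ) : ℂ)) - (ω : ℂ) * δt / 2 by push_cast; ring,
        Complex.cos_sub, Complex.sin_sub] at e2
      set cx := Complex.cos ((ω : ℂ) * ((t + δt/2 : ℝ) : ℂ))
      set sx := Complex.sin ((ω : ℂ) * ((t + δt/2 : ℝ) : ℂ))
      linear_combination e1 - e2 - (δt : ℂ) * (κ : ℂ) * β * e3
        + (- β * v 0 * cx + (ω : ℂ) * p 0 * sx) * hδκ
        - ((δt : ℂ) * (κ : ℂ)) * p 0 * sx * hαβ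
    exact mul_left_cancel₀ hωC key
  have hstepV : ∀ t : ℝ, v (t + δt) = v t + (δt : ℂ) * (κ : ℂ) * α * p (t + δt / 2) := by
    intro t
    have key : (ω : ℂ) * v (t + δt) =
        (ω : ℂ) * (v t + (δt : ℂ) * (κ : ℂ) * α * p (t + δt / 2)) := by
      have e1 := vform (t + δt)
      have e2 := vform t
      have e3 := pform (t + δt / 2)
      rw [show ((ω : ℂ) * ((t + δt : ℝ) : ℂ)) = ((ω : ℂ) * ((t + δt/2 : ℝ) : ℂ)) + (ω : ℂ) * δt / 2 by push_cast; ring,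
        Complex.cos_add, Complex.sin_add] at e1
      rw [show ((ω : ℂ) * (t : ℂ)) = ((ω : ℂ) * ((t + δt/2 : ℝ) : ℂ)) - (ω : ℂ) * δt / 2 by push_cast; ring,
        Complex.cos_sub, Complex.sin_sub] at e2
      set cx := Complex.cos ((ω : ℂ) * ((t + δt/2 : ℝ) : ℂ))
      set sx := Complex.sin ((ω : ℂ) * ((t + δt/2 : ℝ) : ℂ))
      linear_combination e1 - e2 - (δt : ℂ) * (κ : ℂ) * α * e3
        + (- α * p 0 * cx + (ω : ℂ) * v 0 * sx) * hδκ
        - ((δt : ℂ) * (κ : ℂ)) * v 0 * sx * hαβ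
    exact mul_left_cancel₀ hωC key
  -- identification of iterates with exact solution
  have hid : ∀ n : ℕ, P n = p (n * δt) ∧ V n = v (n * δt + δt / 2) := by
    intro n
    induction n with
    | zero => constructor <;> simp [hP0, hV0]
    | succ n ih =>
      obtain ⟨ihP, ihV⟩ := ih
      have hPn : P (n + 1) = p ((n + 1 : ℕ) * δt) := by
        rw [hPrec n, ihP, ihV, ← hstepP (n * δt)]
        congr 1
        push_cast; ring
      constructor
      · exact hPn
      · rw [hVrec n, ihV, hPn,
          show ((n + 1 : ℕ) : ℝ) * δt = (n * δt + δt / 2) + δt / 2 by push_cast; ring,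
          ← hstepV (n * δt + δt / 2)]
        congr 1
        push_cast; ring
  -- uniform bounds on the exact solution
  have habs_cos : ∀ t : ℝ, ‖Complex.cos ((ω : ℂ) * t)‖ ≤ 1 := by
    intro t
    rw [show ((ω : ℂ) * t) = ((ω * t : ℝ) : ℂ) by push_cast; ring, ← Complex.ofReal_cos,
      Complex.norm_real, Real.norm_eq_abs]
    exact Real.abs_cos_le_one _
  have habs_sin : ∀ t : ℝ, ‖Complex.sin ((ω : ℂ) * t)‖ ≤ 1 := by
    intro t
    rw [show ((ω : ℂ) * t) = ((ω * t : ℝ) : ℂ) by push_cast; ring, ← Complex.ofReal_sin,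
      Complex.norm_real, Real.norm_eq_abs]
    exact Real.abs_sin_le_one _
  have hbp : ∀ t : ℝ, ‖p t‖ ≤ ‖p 0‖ + ‖β‖ / ω * ‖v 0‖ := by
    intro t
    have h1 : ω * ‖p t‖ ≤ ω * ‖p 0‖ + ‖β‖ * ‖v 0‖ := by
      have h2 : ‖(ω : ℂ) * p t‖ ≤
          ω * ‖p 0‖ * 1 + ‖β‖ * ‖v 0‖ * 1 := by
        rw [pform t]
        refine le_trans (norm_add_le _ _) ?_
        rw [norm_mul, norm_mul, norm_mul, norm_mul, Complex.norm_real, Real.norm_eq_abs, abs_of_pos hω]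
        gcongr
        · exact habs_cos t
        · exact habs_sin t
      rw [norm_mul, Complex.norm_real, Real.norm_eq_abs, abs_of_pos hω] at h2
      linarith
    rw [show ‖p 0‖ + ‖β‖ / ω * ‖v 0‖
        = (ω * ‖p 0‖ + ‖β‖ * ‖v 0‖) / ω by field_simp,
      le_div_iff₀ hω]
    linarith
  have hbv : ∀ t : ℝ, ‖v t‖ ≤ ‖v 0‖ + ‖α‖ / ω * ‖p 0‖ := by
    intro t
    have h1 : ω * ‖v t‖ ≤ ω * ‖v 0‖ + ‖α‖ * ‖p 0‖ := by
      have h2 : ‖(ω : ℂ) * v t‖ ≤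
          ω * ‖v 0‖ * 1 + ‖α‖ * ‖p 0‖ * 1 := by
        rw [vform t]
        refine le_trans (norm_add_le _ _) ?_
        rw [norm_mul, norm_mul, norm_mul, norm_mul, Complex.norm_real, Real.norm_eq_abs, abs_of_pos hω]
        gcongr
        · exact habs_cos t
        · exact habs_sin t
      rw [norm_mul, Complex.norm_real, Real.norm_eq_abs, abs_of_pos hω] at h2
      linarith
    rw [show ‖v 0‖ + ‖α‖ / ω * ‖p 0‖
        = (ω * ‖v 0‖ + ‖α‖ * ‖p 0‖) / ω by field_simp,
      le_div_iff₀ hω]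
    linarith
  intro n
  obtain ⟨h1, h2⟩ := hid n
  rw [h1, h2]
  exact ⟨hbp _, hbv _⟩
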